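/- Let H be a Hopf algebra, A an algebra, φ : H ⊗ A → A and ω : H ⊗ H → A, with ψ and σ defined as ψ(h ⊗ a) = Σ φ(h₍₁₎ ⊗ a) ⊗ h₍₂₎ and σ(h ⊗ g) = Σ ω(h₍₁₎ ⊗ g₍₁₎) ⊗ h₍₂₎g₍₂₎. Then the partial cocycle condition Σ φ(h₍₁₎ ⊗ ω(g₍₁₎ ⊗ l₍₁₎)) ω(h₍₂₎ ⊗ g₍₂₎l₍₂₎) = Σ ω(h₍₁₎ ⊗ g₍₁₎) ω(h₍₂₎g₍₂₎ ⊗ l) holds for all h, g, l ∈ H if and only if the cocycle condition (μ_A ⊗ H) ∘ (A ⊗ σ) ∘ (σ ⊗ H) = (μ_A ⊗ H) ∘ (A ⊗ σ) ∘ (ψ ⊗ H) ∘ (H ⊗ σ) holds. -/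

import Mathlib

open TensorProduct

variable {R A V H : Type*} [CommRing R] [Ring A] [Algebra R A]
  [AddCommGroup V] [Module R V] [Ring H] [HopfAlgebra R H]

/-- (μ_A ⊗ V) ∘ (A ⊗ ψ) ∘ (ψ ⊗ A) : (V ⊗ A) ⊗ A → A ⊗ V -/
noncomputable def psiMulLHS (ψ : V ⊗[R] A →ₗ[R] A ⊗[R] V) :
    (V ⊗[R] A) ⊗[R] A →ₗ[R] A ⊗[R] V :=
  TensorProduct.map (LinearMap.mul' R A) LinearMap.id
    ∘ₗ (TensorProduct.assoc R A A V).symm.toLinearMap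
    ∘ₗ LinearMap.lTensor A ψ
    ∘ₗ (TensorProduct.assoc R A V A).toLinearMap
    ∘ₗ LinearMap.rTensor A ψ

/-- ψ ∘ (V ⊗ μ_A) : (V ⊗ A) ⊗ A → A ⊗ V -/
noncomputable def psiMulRHS (ψ : V ⊗[R] A →ₗ[R] A ⊗[R] V) :
    (V ⊗[R] A) ⊗[R] A →ₗ[R] A ⊗[R] V :=
  ψ ∘ₗ LinearMap.lTensor V (LinearMap.mul' R A)
    ∘ₗ (TensorProduct.assoc R V A A).toLinearMap

/-- ∇ = (μ_A ⊗ V) ∘ (A ⊗ ψ) ∘ (A ⊗ V ⊗ η_A) : A ⊗ V → A ⊗ V -/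
noncomputable def nabla (ψ : V ⊗[R] A →ₗ[R] A ⊗[R] V) :
    A ⊗[R] V →ₗ[R] A ⊗[R] V :=
  TensorProduct.map (LinearMap.mul' R A) LinearMap.id
    ∘ₗ (TensorProduct.assoc R A A V).symm.toLinearMap
    ∘ₗ LinearMap.lTensor A ψ
    ∘ₗ LinearMap.lTensor A ((TensorProduct.mk R V A).flip 1)

/-- ψ(h ⊗ a) = Σ φ(h₍₁₎ ⊗ a) ⊗ h₍₂₎. -/
noncomputable def psiOf (φ : H ⊗[R] A →ₗ[R] A) : H ⊗[R] A →ₗ[R] A ⊗[R] H :=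
  LinearMap.rTensor H φ
    ∘ₗ (TensorProduct.assoc R H A H).symm.toLinearMap
    ∘ₗ LinearMap.lTensor H (TensorProduct.comm R H A).toLinearMap
    ∘ₗ (TensorProduct.assoc R H H A).toLinearMap
    ∘ₗ LinearMap.rTensor A (Coalgebra.comul : H →ₗ[R] H ⊗[R] H)

/-- σ(h ⊗ g) = Σ ω(h₍₁₎ ⊗ g₍₁₎) ⊗ h₍₂₎g₍₂₎. -/
noncomputable def sigmaOf (ω : H ⊗[R] H →ₗ[R] A) : H ⊗[R] H →ₗ[R] A ⊗[R] H :=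
  TensorProduct.map ω (LinearMap.mul' R H)
    ∘ₗ (TensorProduct.tensorTensorTensorComm R H H H H).toLinearMap
    ∘ₗ TensorProduct.map (Coalgebra.comul : H →ₗ[R] H ⊗[R] H)
        (Coalgebra.comul : H →ₗ[R] H ⊗[R] H)

/-- Condition (ii) of a twisted partial action:
φ(h ⊗ ab) = Σ φ(h₍₁₎ ⊗ a) φ(h₍₂₎ ⊗ b), as maps H ⊗ (A ⊗ A) → A. -/
def IsPartiallyMultiplicative (φ : H ⊗[R] A →ₗ[R] A) : Prop :=
  φ ∘ₗ LinearMap.lTensor H (LinearMap.mul' R A) =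
    LinearMap.mul' R A ∘ₗ TensorProduct.map φ φ
      ∘ₗ (TensorProduct.tensorTensorTensorComm R H H A A).toLinearMap
      ∘ₗ LinearMap.rTensor (A ⊗[R] A) (Coalgebra.comul : H →ₗ[R] H ⊗[R] H)

/-- Twisted condition LHS: (μ_A ⊗ V) ∘ (A ⊗ ψ) ∘ (σ ⊗ A) : (V ⊗ V) ⊗ A → A ⊗ V. -/
noncomputable def twistedLHS (ψ : V ⊗[R] A →ₗ[R] A ⊗[R] V)
    (σ : V ⊗[R] V →ₗ[R] A ⊗[R] V) : (V ⊗[R] V) ⊗[R] A →ₗ[R] A ⊗[R] V :=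
  TensorProduct.map (LinearMap.mul' R A) LinearMap.id
    ∘ₗ (TensorProduct.assoc R A A V).symm.toLinearMap
    ∘ₗ LinearMap.lTensor A ψ
    ∘ₗ (TensorProduct.assoc R A V A).toLinearMap
    ∘ₗ LinearMap.rTensor A σ

/-- Twisted condition RHS: (μ_A ⊗ V) ∘ (A ⊗ σ) ∘ (ψ ⊗ V) ∘ (V ⊗ ψ) : V ⊗ (V ⊗ A) → A ⊗ V. -/
noncomputable def twistedRHS (ψ : V ⊗[R] A →ₗ[R] A ⊗[R] V)
    (σ : V ⊗[R] V →ₗ[R] A ⊗[R] V) : V ⊗[R] (V ⊗[R] A) →ₗ[R] A ⊗[R] V :=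
  TensorProduct.map (LinearMap.mul' R A) LinearMap.id
    ∘ₗ (TensorProduct.assoc R A A V).symm.toLinearMap
    ∘ₗ LinearMap.lTensor A σ
    ∘ₗ (TensorProduct.assoc R A V V).toLinearMap
    ∘ₗ LinearMap.rTensor V ψ
    ∘ₗ (TensorProduct.assoc R V A V).symm.toLinearMap
    ∘ₗ LinearMap.lTensor V ψ

/-- Cocycle condition LHS: (μ_A ⊗ V) ∘ (A ⊗ σ) ∘ (σ ⊗ V) : (V ⊗ V) ⊗ V → A ⊗ V. -/
noncomputable def cocycleLHS (σ : V ⊗[R] V →ₗ[R] A ⊗[R] V) :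
    (V ⊗[R] V) ⊗[R] V →ₗ[R] A ⊗[R] V :=
  TensorProduct.map (LinearMap.mul' R A) LinearMap.id
    ∘ₗ (TensorProduct.assoc R A A V).symm.toLinearMap
    ∘ₗ LinearMap.lTensor A σ
    ∘ₗ (TensorProduct.assoc R A V V).toLinearMap
    ∘ₗ LinearMap.rTensor V σ

/-- Cocycle condition RHS: (μ_A ⊗ V) ∘ (A ⊗ σ) ∘ (ψ ⊗ V) ∘ (V ⊗ σ) : V ⊗ (V ⊗ V) → A ⊗ V. -/
noncomputable def cocycleRHS (ψ : V ⊗[R] A →ₗ[R] A ⊗[R] V)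
    (σ : V ⊗[R] V →ₗ[R] A ⊗[R] V) : V ⊗[R] (V ⊗[R] V) →ₗ[R] A ⊗[R] V :=
  TensorProduct.map (LinearMap.mul' R A) LinearMap.id
    ∘ₗ (TensorProduct.assoc R A A V).symm.toLinearMap
    ∘ₗ LinearMap.lTensor A σ
    ∘ₗ (TensorProduct.assoc R A V V).toLinearMap
    ∘ₗ LinearMap.rTensor V ψ
    ∘ₗ (TensorProduct.assoc R V A V).symm.toLinearMap
    ∘ₗ LinearMap.lTensor V σ

/-- Auxiliary map V ⊗ (A ⊗ V) → A ⊗ V used in the weak crossed product. -/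
noncomputable def wcpAux (ψ : V ⊗[R] A →ₗ[R] A ⊗[R] V)
    (σ : V ⊗[R] V →ₗ[R] A ⊗[R] V) : V ⊗[R] (A ⊗[R] V) →ₗ[R] A ⊗[R] V :=
  TensorProduct.map (LinearMap.mul' R A) LinearMap.id
    ∘ₗ (TensorProduct.assoc R A A V).symm.toLinearMap
    ∘ₗ LinearMap.lTensor A σ
    ∘ₗ (TensorProduct.assoc R A V V).toLinearMap
    ∘ₗ LinearMap.rTensor V ψ
    ∘ₗ (TensorProduct.assoc R V A V).symm.toLinearMap

/-- The weak crossed product multiplication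
μ_{A⊗V} = (μ_A ⊗ V) ∘ (μ_A ⊗ σ) ∘ (A ⊗ ψ ⊗ V) on A ⊗ V. -/
noncomputable def wcpMul (ψ : V ⊗[R] A →ₗ[R] A ⊗[R] V)
    (σ : V ⊗[R] V →ₗ[R] A ⊗[R] V) :
    (A ⊗[R] V) ⊗[R] (A ⊗[R] V) →ₗ[R] A ⊗[R] V :=
  TensorProduct.map (LinearMap.mul' R A) LinearMap.id
    ∘ₗ (TensorProduct.assoc R A A V).symm.toLinearMap
    ∘ₗ LinearMap.lTensor A (wcpAux ψ σ)
    ∘ₗ (TensorProduct.assoc R A V (A ⊗[R] V)).toLinearMap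

/-- Partial twisted condition LHS: μ_A ∘ (A ⊗ ω) ∘ (ψ ⊗ H) ∘ (H ⊗ ψ),
i.e. (h ⊗ g ⊗ a) ↦ Σ φ(h₍₁₎ ⊗ φ(g₍₁₎ ⊗ a)) ω(h₍₂₎ ⊗ g₍₂₎). -/
noncomputable def partialTwistedLHS (φ : H ⊗[R] A →ₗ[R] A)
    (ω : H ⊗[R] H →ₗ[R] A) : H ⊗[R] (H ⊗[R] A) →ₗ[R] A :=
  LinearMap.mul' R A
    ∘ₗ LinearMap.lTensor A ω
    ∘ₗ (TensorProduct.assoc R A H H).toLinearMap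
    ∘ₗ LinearMap.rTensor H (psiOf φ)
    ∘ₗ (TensorProduct.assoc R H A H).symm.toLinearMap
    ∘ₗ LinearMap.lTensor H (psiOf φ)

/-- Partial twisted condition RHS: μ_A ∘ (A ⊗ φ) ∘ (σ ⊗ A),
i.e. (h ⊗ g ⊗ a) ↦ Σ ω(h₍₁₎ ⊗ g₍₁₎) φ(h₍₂₎g₍₂₎ ⊗ a). -/
noncomputable def partialTwistedRHS (φ : H ⊗[R] A →ₗ[R] A)
    (ω : H ⊗[R] H →ₗ[R] A) : (H ⊗[R] H) ⊗[R] A →ₗ[R] A :=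
  LinearMap.mul' R A
    ∘ₗ LinearMap.lTensor A φ
    ∘ₗ (TensorProduct.assoc R A H A).toLinearMap
    ∘ₗ LinearMap.rTensor A (sigmaOf ω)

/-- Partial cocycle condition LHS:
(h ⊗ g ⊗ l) ↦ Σ φ(h₍₁₎ ⊗ ω(g₍₁₎ ⊗ l₍₁₎)) ω(h₍₂₎ ⊗ g₍₂₎l₍₂₎),
i.e. μ_A ∘ (A ⊗ ω) ∘ (ψ ⊗ H) ∘ (H ⊗ σ). -/
noncomputable def partialCocycleLHS (φ : H ⊗[R] A →ₗ[R] A)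
    (ω : H ⊗[R] H →ₗ[R] A) : H ⊗[R] (H ⊗[R] H) →ₗ[R] A :=
  LinearMap.mul' R A
    ∘ₗ LinearMap.lTensor A ω
    ∘ₗ (TensorProduct.assoc R A H H).toLinearMap
    ∘ₗ LinearMap.rTensor H (psiOf φ)
    ∘ₗ (TensorProduct.assoc R H A H).symm.toLinearMap
    ∘ₗ LinearMap.lTensor H (sigmaOf ω)

/-- Partial cocycle condition RHS:
(h ⊗ g ⊗ l) ↦ Σ ω(h₍₁₎ ⊗ g₍₁₎) ω(h₍₂₎g₍₂₎ ⊗ l), i.e. μ_A ∘ (A ⊗ ω) ∘ (σ ⊗ H). -/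
noncomputable def partialCocycleRHS (ω : H ⊗[R] H →ₗ[R] A) :
    (H ⊗[R] H) ⊗[R] H →ₗ[R] A :=
  LinearMap.mul' R A
    ∘ₗ LinearMap.lTensor A ω
    ∘ₗ (TensorProduct.assoc R A H H).toLinearMap
    ∘ₗ LinearMap.rTensor H (sigmaOf ω)

/-!
Over the coalgebra `H ⊗ H`, σ is the convolution product `(ι_A ∘ ω) ⋆ (ι_H ∘ μ_H)` of maps into
the algebra `A ⊗ H`, where `ι_A`, `ι_H` are the two inclusions. Since `μ_H` is a coalgebra map,
this survives precomposition with `μ_H ⊗ H` and `H ⊗ μ_H`. Unfolding the outer σ in each side of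
the cocycle condition and using associativity of convolution over `H ⊗ H ⊗ H` (that is,
coassociativity) writes that side as `(ι_A ∘ f) ⋆ (ι_H ∘ m₃)`, where `f` is the corresponding side
of the partial cocycle condition and `m₃` the triple product. Because `ε ∘ m₃ = ε`, applying
`A ⊗ ε` recovers `f`, so `f ↦ (ι_A ∘ f) ⋆ (ι_H ∘ m₃)` is injective and the two conditions are
equivalent.
-/

open Coalgebra WithConv Algebra.TensorProduct

section Coalgebra

variable {k C D M : Type*} [CommSemiring k] [AddCommMonoid C] [Module k C] [Coalgebra k C]
  [AddCommMonoid D] [Module k D] [CoalgebraStruct k D] [AddCommMonoid M] [Module k M]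

theorem map_comp_comul_left_injective (p : C →ₗc[k] D) :
    Function.Injective fun f : C →ₗ[k] M => TensorProduct.map f (p : C →ₗ[k] D) ∘ₗ comul := by
  have hp : ∀ f : C →ₗ[k] M, LinearMap.lTensor M counit ∘ₗ TensorProduct.map f (p : C →ₗ[k] D) =
      LinearMap.rTensor k f ∘ₗ LinearMap.lTensor C counit := fun f => by
    rw [LinearMap.lTensor_comp_map, CoalgHomClass.counit_comp, LinearMap.rTensor_comp_lTensor]
  have hleft : ∀ f : C →ₗ[k] M, (TensorProduct.rid k M).toLinearMap ∘ₗ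
      LinearMap.lTensor M counit ∘ₗ TensorProduct.map f (p : C →ₗ[k] D) ∘ₗ comul = f := by
    intro f
    rw [← LinearMap.comp_assoc _ _ (LinearMap.lTensor M counit), hp,
      LinearMap.comp_assoc, lTensor_counit_comp_comul]
    ext; simp
  intro f g hfg
  simpa only [hleft] using congr((TensorProduct.rid k M).toLinearMap ∘ₗ
    LinearMap.lTensor M counit ∘ₗ $hfg)

theorem map_comp_comul_comp_coalgHom {E N : Type*} [AddCommMonoid E] [Module k E]
    [CoalgebraStruct k E] [AddCommMonoid N] [Module k N] (f : D →ₗ[k] M) (g : D →ₗ[k] N)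
    (p : E →ₗc[k] D) :
    TensorProduct.map f g ∘ₗ comul ∘ₗ (p : E →ₗ[k] D) =
      TensorProduct.map (f ∘ₗ p) (g ∘ₗ p) ∘ₗ comul := by
  rw [← CoalgHomClass.map_comp_comul, ← LinearMap.comp_assoc, ← TensorProduct.map_comp]

end Coalgebra

section Convolution

variable {k B C D E S T : Type*} [CommSemiring k] [Semiring B] [Algebra k B]
  [AddCommMonoid C] [Module k C] [Coalgebra k C]
  [AddCommMonoid D] [Module k D] [Coalgebra k D] [AddCommMonoid E] [Module k E] [Coalgebra k E]
  [Semiring S] [Algebra k S] [Semiring T] [Algebra k T]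

theorem toConv_map_comp_comul (f : C →ₗ[k] S) (g : C →ₗ[k] T) :
    toConv (TensorProduct.map f g ∘ₗ comul) =
      toConv ((includeLeft : S →ₐ[k] S ⊗[k] T).toLinearMap ∘ₗ f) *
        toConv ((includeRight : T →ₐ[k] S ⊗[k] T).toLinearMap ∘ₗ g) := by
  have h : LinearMap.mul' k (S ⊗[k] T) ∘ₗ
      TensorProduct.map (includeLeft : S →ₐ[k] S ⊗[k] T).toLinearMap includeRight.toLinearMap =
      LinearMap.id := by
    ext; simp
  rw [LinearMap.convMul_def, TensorProduct.map_comp, ← LinearMap.comp_assoc,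
    ← LinearMap.comp_assoc, h, LinearMap.id_comp]

theorem toConv_comp_rid_comp_lTensor_counit_mul (f : D →ₗ[k] B) (g : D ⊗[k] E →ₗ[k] B) :
    toConv (f ∘ₗ (TensorProduct.rid k D).toLinearMap ∘ₗ LinearMap.lTensor D counit) * toConv g =
      toConv (LinearMap.mul' k B ∘ₗ TensorProduct.map f g ∘ₗ
        (TensorProduct.assoc k D D E).toLinearMap ∘ₗ LinearMap.rTensor E comul) := by
  ext1
  refine TensorProduct.ext' fun d e => ?_
  conv_rhs => rw [← sum_counit_smul (ℛ k e)]
  simp only [LinearMap.convMul_apply, TensorProduct.comul_tmul, ← (ℛ k d).eq, ← (ℛ k e).eq]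
  simp [TensorProduct.sum_tmul, TensorProduct.tmul_sum, ← (ℛ k d).eq, Finset.smul_sum]

end Convolution

theorem map_mul'_comp_assoc_symm_comp_lTensor {k S T X Y : Type*} [CommSemiring k] [Semiring S]
    [Algebra k S] [Semiring T] [Algebra k T] [AddCommMonoid X] [Module k X] [AddCommMonoid Y]
    [Module k Y] (F : X →ₗ[k] S ⊗[k] T) (G : Y →ₗ[k] S ⊗[k] X) :
    TensorProduct.map (LinearMap.mul' k S) LinearMap.id ∘ₗ
        (TensorProduct.assoc k S S T).symm.toLinearMap ∘ₗ LinearMap.lTensor S F ∘ₗ G =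
      LinearMap.mul' k (S ⊗[k] T) ∘ₗ
        TensorProduct.map (includeLeft : S →ₐ[k] S ⊗[k] T).toLinearMap F ∘ₗ G := by
  simp only [← LinearMap.comp_assoc]
  congr 1
  refine TensorProduct.ext' fun s x => ?_
  simp only [LinearMap.comp_apply, LinearMap.lTensor_tmul, TensorProduct.map_tmul]
  induction F x with
  | zero => simp
  | add y z hy hz => simp only [map_add, TensorProduct.tmul_add, hy, hz]
  | tmul s' t => simp

theorem sigmaOf_eq_map_comp_comul (ω : H ⊗[R] H →ₗ[R] A) :
    sigmaOf ω = TensorProduct.map ω (LinearMap.mul' R H) ∘ₗ comul :=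
  rfl

section Unfolding

variable {B : Type*} [Semiring B] [Algebra R B]

theorem toConv_mul'_comp_map_comp_rTensor_sigmaOf (ω : H ⊗[R] H →ₗ[R] A) (j : A →ₗ[R] B)
    (τ : H ⊗[R] H →ₗ[R] B) :
    toConv (LinearMap.mul' R B ∘ₗ TensorProduct.map j τ ∘ₗ
        (TensorProduct.assoc R A H H).toLinearMap ∘ₗ LinearMap.rTensor H (sigmaOf ω)) =
      toConv (j ∘ₗ ω ∘ₗ (TensorProduct.rid R (H ⊗[R] H)).toLinearMap ∘ₗ
          LinearMap.lTensor (H ⊗[R] H) counit) *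
        toConv (τ ∘ₗ LinearMap.rTensor H (LinearMap.mul' R H)) := by
  rw [← LinearMap.comp_assoc _ ω j, toConv_comp_rid_comp_lTensor_counit_mul]
  congr 1
  refine TensorProduct.ext' fun x l => ?_
  simp only [sigmaOf_eq_map_comp_comul, LinearMap.comp_apply, LinearMap.rTensor_tmul]
  induction (comul (R := R) x) with
  | zero => simp
  | add y z hy hz => simp only [map_add, TensorProduct.add_tmul, hy, hz]
  | tmul y z => simp

theorem toConv_mul'_comp_map_comp_rTensor_psiOf (φ : H ⊗[R] A →ₗ[R] A) (ω : H ⊗[R] H →ₗ[R] A)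
    (j : A →ₗ[R] B) (τ : H ⊗[R] H →ₗ[R] B) :
    toConv (LinearMap.mul' R B ∘ₗ TensorProduct.map j τ ∘ₗ
        (TensorProduct.assoc R A H H).toLinearMap ∘ₗ LinearMap.rTensor H (psiOf φ) ∘ₗ
        (TensorProduct.assoc R H A H).symm.toLinearMap ∘ₗ LinearMap.lTensor H (sigmaOf ω)) =
      toConv (j ∘ₗ φ ∘ₗ LinearMap.lTensor H ω) *
        toConv (τ ∘ₗ LinearMap.lTensor H (LinearMap.mul' R H)) := by
  ext1
  refine TensorProduct.ext' fun h y => ?_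
  simp only [sigmaOf_eq_map_comp_comul, psiOf, LinearMap.convMul_apply, TensorProduct.comul_tmul,
    LinearMap.comp_apply, LinearMap.lTensor_tmul]
  rw [← (ℛ R y).eq]
  simp only [map_sum, TensorProduct.map_tmul, TensorProduct.tmul_sum, LinearEquiv.coe_coe,
    TensorProduct.assoc_symm_tmul, LinearMap.rTensor_tmul, LinearMap.comp_apply]
  simp [← (ℛ R h).eq, TensorProduct.sum_tmul]

end Unfolding

theorem cocycleLHS_sigmaOf (ω : H ⊗[R] H →ₗ[R] A) :
    cocycleLHS (sigmaOf ω) = TensorProduct.map (partialCocycleRHS ω)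
      (LinearMap.mul' R H ∘ₗ LinearMap.rTensor H (LinearMap.mul' R H)) ∘ₗ comul := by
  let ι : A →ₐ[R] A ⊗[R] H := includeLeft
  let ι' : H →ₐ[R] A ⊗[R] H := includeRight
  let μ := LinearMap.mul' R H
  let ε₃ := (TensorProduct.rid R (H ⊗[R] H)).toLinearMap ∘ₗ
    LinearMap.lTensor (H ⊗[R] H) (counit : H →ₗ[R] R)
  have hσ : sigmaOf ω ∘ₗ LinearMap.rTensor H μ =
      TensorProduct.map (ω ∘ₗ LinearMap.rTensor H μ) (μ ∘ₗ LinearMap.rTensor H μ) ∘ₗ comul :=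
    map_comp_comul_comp_coalgHom ω μ (CoalgHom.rTensor H (Bialgebra.mulCoalgHom R H))
  have hpc : partialCocycleRHS ω =
      (toConv (ω ∘ₗ ε₃) * toConv (ω ∘ₗ LinearMap.rTensor H μ)).ofConv :=
    congrArg ofConv (toConv_mul'_comp_map_comp_rTensor_sigmaOf ω LinearMap.id ω)
  apply toConv_injective
  calc toConv (cocycleLHS (sigmaOf ω))
      = toConv (ι.toLinearMap ∘ₗ ω ∘ₗ ε₃) * toConv (sigmaOf ω ∘ₗ LinearMap.rTensor H μ) := by
        rw [cocycleLHS, map_mul'_comp_assoc_symm_comp_lTensor,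
          toConv_mul'_comp_map_comp_rTensor_sigmaOf]
    _ = toConv (ι.toLinearMap ∘ₗ ω ∘ₗ ε₃) * toConv (ι.toLinearMap ∘ₗ ω ∘ₗ LinearMap.rTensor H μ) *
          toConv (ι'.toLinearMap ∘ₗ μ ∘ₗ LinearMap.rTensor H μ) := by
        rw [hσ, toConv_map_comp_comul, mul_assoc]
    _ = toConv (ι.toLinearMap ∘ₗ partialCocycleRHS ω) *
          toConv (ι'.toLinearMap ∘ₗ μ ∘ₗ LinearMap.rTensor H μ) := by
        rw [hpc, LinearMap.algHom_comp_convMul_distrib, toConv_ofConv]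
    _ = _ := (toConv_map_comp_comul _ _).symm

theorem cocycleRHS_psiOf_sigmaOf (φ : H ⊗[R] A →ₗ[R] A) (ω : H ⊗[R] H →ₗ[R] A) :
    cocycleRHS (psiOf φ) (sigmaOf ω) = TensorProduct.map (partialCocycleLHS φ ω)
      (LinearMap.mul' R H ∘ₗ LinearMap.lTensor H (LinearMap.mul' R H)) ∘ₗ comul := by
  let ι : A →ₐ[R] A ⊗[R] H := includeLeft
  let ι' : H →ₐ[R] A ⊗[R] H := includeRight
  let μ := LinearMap.mul' R H
  have hσ : sigmaOf ω ∘ₗ LinearMap.lTensor H μ =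
      TensorProduct.map (ω ∘ₗ LinearMap.lTensor H μ) (μ ∘ₗ LinearMap.lTensor H μ) ∘ₗ comul :=
    map_comp_comul_comp_coalgHom ω μ (CoalgHom.lTensor H (Bialgebra.mulCoalgHom R H))
  have hpc : partialCocycleLHS φ ω =
      (toConv (φ ∘ₗ LinearMap.lTensor H ω) * toConv (ω ∘ₗ LinearMap.lTensor H μ)).ofConv :=
    congrArg ofConv (toConv_mul'_comp_map_comp_rTensor_psiOf φ ω LinearMap.id ω)
  apply toConv_injective
  calc toConv (cocycleRHS (psiOf φ) (sigmaOf ω))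
      = toConv (ι.toLinearMap ∘ₗ φ ∘ₗ LinearMap.lTensor H ω) *
          toConv (sigmaOf ω ∘ₗ LinearMap.lTensor H μ) := by
        rw [cocycleRHS, map_mul'_comp_assoc_symm_comp_lTensor,
          toConv_mul'_comp_map_comp_rTensor_psiOf]
    _ = toConv (ι.toLinearMap ∘ₗ φ ∘ₗ LinearMap.lTensor H ω) *
          toConv (ι.toLinearMap ∘ₗ ω ∘ₗ LinearMap.lTensor H μ) *
          toConv (ι'.toLinearMap ∘ₗ μ ∘ₗ LinearMap.lTensor H μ) := by
        rw [hσ, toConv_map_comp_comul, mul_assoc]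
    _ = toConv (ι.toLinearMap ∘ₗ partialCocycleLHS φ ω) *
          toConv (ι'.toLinearMap ∘ₗ μ ∘ₗ LinearMap.lTensor H μ) := by
        rw [hpc, LinearMap.algHom_comp_convMul_distrib, toConv_ofConv]
    _ = _ := (toConv_map_comp_comul _ _).symm

theorem cocycleRHS_psiOf_sigmaOf_comp_assoc (φ : H ⊗[R] A →ₗ[R] A) (ω : H ⊗[R] H →ₗ[R] A) :
    cocycleRHS (psiOf φ) (sigmaOf ω) ∘ₗ (TensorProduct.assoc R H H H).toLinearMap =
      TensorProduct.map (partialCocycleLHS φ ω ∘ₗ (TensorProduct.assoc R H H H).toLinearMap)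
        (LinearMap.mul' R H ∘ₗ LinearMap.rTensor H (LinearMap.mul' R H)) ∘ₗ comul := by
  have hμ : LinearMap.mul' R H ∘ₗ LinearMap.lTensor H (LinearMap.mul' R H) ∘ₗ
      (TensorProduct.assoc R H H H).toLinearMap =
      LinearMap.mul' R H ∘ₗ LinearMap.rTensor H (LinearMap.mul' R H) := by
    ext; simp [mul_assoc]
  rw [cocycleRHS_psiOf_sigmaOf, LinearMap.comp_assoc, ← hμ,
    ← LinearMap.comp_assoc _ _ (LinearMap.mul' R H)]
  exact map_comp_comul_comp_coalgHom _ _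
    (Coalgebra.TensorProduct.assoc R R H H H).toCoalgHom

theorem partialCocycle_iff_cocycle (φ : H ⊗[R] A →ₗ[R] A)
    (ω : H ⊗[R] H →ₗ[R] A) :
    (partialCocycleLHS φ ω ∘ₗ (TensorProduct.assoc R H H H).toLinearMap =
        partialCocycleRHS ω) ↔
      (cocycleLHS (sigmaOf ω) =
        cocycleRHS (psiOf φ) (sigmaOf ω)
          ∘ₗ (TensorProduct.assoc R H H H).toLinearMap) := by
  rw [cocycleLHS_sigmaOf, cocycleRHS_psiOf_sigmaOf_comp_assoc, eq_comm]
  exact (map_comp_comul_left_injective ((Bialgebra.mulCoalgHom R H).comp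
    (CoalgHom.rTensor H (Bialgebra.mulCoalgHom R H)))).eq_iff.symm
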